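/- arXiv:1711.00320 — 7 statements merged into one kernel-verified Lean document; each statement's English description precedes it below -/
import Mathlib

section
/- (Proposition 2, optimality of the closed-form aggregation step.) Let N ≥ 1, M ≥ 1, ρ > 0, p ∈ ℝ^N, and y_b, λ_b ∈ ℝ^N for b = 1,…,M be given, and set Ω := (1/M) Σ_{b=1}^M (ρ y_b − λ_b), Y* := (M/(ρN)) 1_{N×N}(Ω + p), and ȳ*_b := (1/ρ)(ρ y_b − λ_b − Ω) + (1/M) Y*. Then for every Y ∈ ℝ^N and ȳ_1,…,ȳ_M ∈ ℝ^N satisfying Y = Σ_{b=1}^M ȳ_b and Y^1 = ⋯ = Y^N, one has Σ_{b=1}^M ( λ_b^⊤ ȳ*_b + (ρ/2)‖ȳ*_b − y_b‖_2² ) − p^⊤ Y* ≤ Σ_{b=1}^M ( λ_b^⊤ ȳ_b + (ρ/2)‖ȳ_b − y_b‖_2² ) − p^⊤ Y; that is, (Y*, {ȳ*_b}_b) minimizes the aggregation-step problem. -/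
/-!
Once `Y = Σ_b ȳ_b` is substituted, the objective is a convex quadratic in `(ȳ_b)_b`. At `ȳ*` its
gradient with respect to `ȳ_b` is the same vector `g = (ρ/M) Y* − (Ω + p)` for every `b`, and `g`
sums to zero by the choice of `Y*`. A feasible perturbation shifts all entries of `Σ_b ȳ_b` by the
same amount, so it is orthogonal to `g`, and the objective grows by the nonnegative quadratic term.
-/

open Finset

section

variable {β ι : Type*} [Fintype β] [Fintype ι]

noncomputable def aggregationCost (ρ : ℝ) (p : ι → ℝ) (y lam x : β → ι → ℝ) : ℝ :=
  (∑ b, ((∑ k, lam b k * x b k) + (ρ / 2) * ∑ k, (x b k - y b k) ^ 2))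
    - ∑ k, p k * ∑ b, x b k

theorem aggregationCost_eq_sum_sum (ρ : ℝ) (p : ι → ℝ) (y lam x : β → ι → ℝ) :
    aggregationCost ρ p y lam x =
      ∑ b, ∑ k, (lam b k * x b k + ρ / 2 * (x b k - y b k) ^ 2 - p k * x b k) := by
  simp only [aggregationCost, mul_sum, sum_sub_distrib, sum_add_distrib]
  exact congrArg _ sum_comm

theorem sum_mul_eq_zero_of_sum_eq_zero {g d : ι → ℝ} (hg : ∑ k, g k = 0)
    (hd : ∀ k k', d k = d k') : ∑ k, g k * d k = 0 := by
  rcases isEmpty_or_nonempty ι with _ | ⟨⟨k₀⟩⟩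
  · exact sum_of_isEmpty _
  · rw [sum_congr rfl fun k _ => by rw [hd k k₀], ← sum_mul, hg, zero_mul]

theorem aggregationCost_le_of_stationary {ρ : ℝ} (hρ : 0 ≤ ρ) {p : ι → ℝ}
    {y lam xs x : β → ι → ℝ} {g : ι → ℝ} (hg : ∑ k, g k = 0)
    (hstat : ∀ b k, lam b k + ρ * (xs b k - y b k) - p k = g k)
    (hxs : ∀ k k', ∑ b, xs b k = ∑ b, xs b k') (hx : ∀ k k', ∑ b, x b k = ∑ b, x b k') :
    aggregationCost ρ p y lam xs ≤ aggregationCost ρ p y lam x := by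
  have hsplit : aggregationCost ρ p y lam x - aggregationCost ρ p y lam xs =
      ∑ b, ∑ k, ρ / 2 * (x b k - xs b k) ^ 2 + ∑ k, g k * ∑ b, (x b k - xs b k) := by
    simp only [aggregationCost_eq_sum_sum, ← sum_sub_distrib, mul_sum]
    rw [sum_comm (γ := ι), ← sum_add_distrib]
    refine sum_congr rfl fun b _ => ?_
    rw [← sum_add_distrib]
    refine sum_congr rfl fun k _ => ?_
    rw [← hstat b k]
    ring
  have hlin : ∑ k, g k * ∑ b, (x b k - xs b k) = 0 :=
    sum_mul_eq_zero_of_sum_eq_zero hg fun k k' => by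
      simp only [sum_sub_distrib, hx k k', hxs k k']
  have hquad : 0 ≤ ∑ b, ∑ k, ρ / 2 * (x b k - xs b k) ^ 2 := by positivity
  linarith

end

/-- **Proposition 2.** Optimality of the closed-form aggregation step:
the point `(Y*, {ȳ*_b}_b)` minimizes the aggregation-step objective
`Σ_b (λ_b⊤ ȳ_b + (ρ/2)‖ȳ_b − y_b‖²) − p⊤ Y` over all feasible `(Y, {ȳ_b}_b)`
with `Y = Σ_b ȳ_b` and all entries of `Y` equal. -/
theorem aggregation_step_optimality
    (N M : ℕ) (hN : 1 ≤ N) (hM : 1 ≤ M)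
    (ρ : ℝ) (hρ : 0 < ρ) (p : Fin N → ℝ)
    (y lam : Fin M → Fin N → ℝ)
    (Ω : Fin N → ℝ)
    (hΩ : ∀ k, Ω k = (1 / (M : ℝ)) * ∑ b, (ρ * y b k - lam b k))
    (Ystar : Fin N → ℝ)
    (hY : ∀ k, Ystar k = ((M : ℝ) / (ρ * (N : ℝ))) * ∑ j, (Ω j + p j))
    (ybarstar : Fin M → Fin N → ℝ)
    (hybar : ∀ b k, ybarstar b k =
      (1 / ρ) * (ρ * y b k - lam b k - Ω k) + (1 / (M : ℝ)) * Ystar k)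
    (Y : Fin N → ℝ) (ybar : Fin M → Fin N → ℝ)
    (hfeas : ∀ k, Y k = ∑ b, ybar b k)
    (hconst : ∀ k k', Y k = Y k') :
    (∑ b, ((∑ k, lam b k * ybarstar b k)
        + (ρ / 2) * ∑ k, (ybarstar b k - y b k) ^ 2)) - ∑ k, p k * Ystar k
      ≤ (∑ b, ((∑ k, lam b k * ybar b k)
        + (ρ / 2) * ∑ k, (ybar b k - y b k) ^ 2)) - ∑ k, p k * Y k := by
  have hM0 : (M : ℝ) ≠ 0 := Nat.cast_ne_zero.mpr (by omega)
  have hN0 : (N : ℝ) ≠ 0 := Nat.cast_ne_zero.mpr (by omega)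
  have hstat : ∀ b k, lam b k + ρ * (ybarstar b k - y b k) - p k
      = ρ / M * Ystar k - (Ω k + p k) := by
    intro b k
    rw [hybar]
    field_simp
    ring
  have hg : ∑ k, (ρ / M * Ystar k - (Ω k + p k)) = 0 := by
    simp only [hY, sum_sub_distrib, sum_const, card_univ, Fintype.card_fin, nsmul_eq_mul]
    field_simp
    ring
  have hsum : ∀ k, ∑ b, ybarstar b k = Ystar k := by
    intro k
    simp only [hybar, sum_add_distrib, ← mul_sum, sum_sub_distrib, sum_const, card_univ,
      Fintype.card_fin, nsmul_eq_mul, hΩ k]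
    field_simp
    ring
  have hopt := aggregationCost_le_of_stationary hρ.le hg hstat
    (fun k k' => by rw [hsum, hsum, hY, hY]) (fun k k' => by rw [← hfeas k, ← hfeas k', hconst])
  simpa only [aggregationCost, hsum, ← hfeas] using hopt
end

section
/- (Uniqueness of the aggregation-step minimizer.) Let N ≥ 1, M ≥ 1, ρ > 0, p ∈ ℝ^N, and y_b, λ_b ∈ ℝ^N for b = 1,…,M be given, and set Ω := (1/M) Σ_{b=1}^M (ρ y_b − λ_b), Y* := (M/(ρN)) 1_{N×N}(Ω + p), and ȳ*_b := (1/ρ)(ρ y_b − λ_b − Ω) + (1/M) Y*. If (Y, {ȳ_b}_b) is feasible for the aggregation-step problem (Y = Σ_b ȳ_b and Y^1 = ⋯ = Y^N) and attains an objective value less than or equal to that of (Y*, {ȳ*_b}_b), then Y = Y* and ȳ_b = ȳ*_b for every b = 1,…,M. -/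
/-!
After substituting `Y = ∑ b, ȳ_b`, the objective is a separable quadratic in the `ȳ_b` with
Hessian `ρ • 1`. Its gradient at `ȳ*` is `c k = ρ / M * Y* k - Ω k - p k`, the same for every
building, and `∑ k, c k = 0`. A feasible direction `ȳ - ȳ*` sums over the buildings to the
constant vector `Y - Y*`, so the gradient is orthogonal to it and the objective at `ȳ` exceeds the
one at `ȳ*` by `ρ / 2 * ∑ b, ‖ȳ_b - ȳ*_b‖²`.
-/

open Finset

lemma sum_mul_eq_zero_of_forall_eq {ι : Type*} [Fintype ι] {c v : ι → ℝ}
    (hv : ∀ i j, v i = v j) (hc : ∑ i, c i = 0) : ∑ i, c i * v i = 0 := by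
  cases isEmpty_or_nonempty ι with
  | inl _ => simp
  | inr h =>
    obtain ⟨i₀⟩ := h
    simp_rw [hv _ i₀, ← sum_mul, hc, zero_mul]

namespace Aggregation

variable {ι κ : Type*} [Fintype ι] [Fintype κ] (ρ : ℝ) (p : κ → ℝ) (y lam : ι → κ → ℝ)

noncomputable def cost (x : ι → κ → ℝ) : ℝ :=
  ∑ b, ∑ k, (lam b k * x b k + ρ / 2 * (x b k - y b k) ^ 2 - p k * x b k)

lemma objective_eq_cost {Y : κ → ℝ} {x : ι → κ → ℝ} (hY : ∀ k, Y k = ∑ b, x b k) :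
    (∑ b, ((∑ k, lam b k * x b k) + ρ / 2 * ∑ k, (x b k - y b k) ^ 2)) - ∑ k, p k * Y k
      = cost ρ p y lam x := by
  have hpY : ∑ k, p k * Y k = ∑ b, ∑ k, p k * x b k := by
    simp_rw [hY, mul_sum]
    exact sum_comm
  rw [hpY, ← sum_sub_distrib, cost]
  refine sum_congr rfl fun b _ => ?_
  rw [mul_sum, ← sum_add_distrib, ← sum_sub_distrib]

lemma cost_eq_add (x x₀ : ι → κ → ℝ) :
    cost ρ p y lam x = cost ρ p y lam x₀
      + ∑ b, ∑ k, (lam b k + ρ * (x₀ b k - y b k) - p k) * (x b k - x₀ b k)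
      + ρ / 2 * ∑ b, ∑ k, (x b k - x₀ b k) ^ 2 := by
  simp only [cost, mul_sum, ← sum_add_distrib]
  refine sum_congr rfl fun b _ => sum_congr rfl fun k _ => ?_
  ring

/-- `hgrad` says that the gradient of `cost` at `x₀` is `c`, whatever the building. -/
lemma eq_of_cost_le (hρ : 0 < ρ) {x x₀ : ι → κ → ℝ} {c : κ → ℝ}
    (hgrad : ∀ b k, lam b k + ρ * (x₀ b k - y b k) - p k = c k) (hc : ∑ k, c k = 0)
    (hconst : ∀ k k', ∑ b, (x b k - x₀ b k) = ∑ b, (x b k' - x₀ b k'))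
    (hle : cost ρ p y lam x ≤ cost ρ p y lam x₀) : x = x₀ := by
  have hlin : ∑ b, ∑ k, (lam b k + ρ * (x₀ b k - y b k) - p k) * (x b k - x₀ b k) = 0 := by
    simp_rw [hgrad, sum_comm (γ := ι), ← mul_sum]
    exact sum_mul_eq_zero_of_forall_eq hconst hc
  have hsq : ∑ b, ∑ k, (x b k - x₀ b k) ^ 2 ≤ 0 := by
    rw [cost_eq_add ρ p y lam x x₀, hlin, add_zero] at hle
    nlinarith
  have hsq_zero := le_antisymm hsq (by positivity)
  ext b k
  rw [sum_eq_zero_iff_of_nonneg fun _ _ => by positivity] at hsq_zero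
  have hb := hsq_zero b (mem_univ b)
  rw [sum_eq_zero_iff_of_nonneg fun _ _ => by positivity] at hb
  exact sub_eq_zero.mp (pow_eq_zero_iff two_ne_zero |>.mp (hb k (mem_univ k)))

end Aggregation

/-- Uniqueness of the aggregation-step minimizer: any feasible
point whose objective value is at most that of `(Y*, {ȳ*_b}_b)` must coincide
with `(Y*, {ȳ*_b}_b)`. -/
theorem aggregation_step_uniqueness
    (N M : ℕ) (hN : 1 ≤ N) (hM : 1 ≤ M)
    (ρ : ℝ) (hρ : 0 < ρ) (p : Fin N → ℝ)
    (y lam : Fin M → Fin N → ℝ)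
    (Ω : Fin N → ℝ)
    (hΩ : ∀ k, Ω k = (1 / (M : ℝ)) * ∑ b, (ρ * y b k - lam b k))
    (Ystar : Fin N → ℝ)
    (hY : ∀ k, Ystar k = ((M : ℝ) / (ρ * (N : ℝ))) * ∑ j, (Ω j + p j))
    (ybarstar : Fin M → Fin N → ℝ)
    (hybar : ∀ b k, ybarstar b k =
      (1 / ρ) * (ρ * y b k - lam b k - Ω k) + (1 / (M : ℝ)) * Ystar k)
    (Y : Fin N → ℝ) (ybar : Fin M → Fin N → ℝ)
    (hfeas : ∀ k, Y k = ∑ b, ybar b k)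
    (hconst : ∀ k k', Y k = Y k')
    (hobj : (∑ b, ((∑ k, lam b k * ybar b k)
        + (ρ / 2) * ∑ k, (ybar b k - y b k) ^ 2)) - ∑ k, p k * Y k
      ≤ (∑ b, ((∑ k, lam b k * ybarstar b k)
        + (ρ / 2) * ∑ k, (ybarstar b k - y b k) ^ 2)) - ∑ k, p k * Ystar k) :
    Y = Ystar ∧ ∀ b, ybar b = ybarstar b := by
  have hM₀ : (M : ℝ) ≠ 0 := by positivity
  have hN₀ : (N : ℝ) ≠ 0 := by positivity
  have hfeas_star : ∀ k, Ystar k = ∑ b, ybarstar b k := by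
    intro k
    simp_rw [hybar, sum_add_distrib, ← mul_sum, sum_sub_distrib, sum_const, card_univ,
      Fintype.card_fin, nsmul_eq_mul, hΩ]
    field_simp
    rw [sum_sub_distrib]
    ring
  have hgrad : ∀ b k, lam b k + ρ * (ybarstar b k - y b k) - p k
      = ρ / M * Ystar k - Ω k - p k := by
    intro b k
    rw [hybar]
    field_simp
    ring
  have hc : ∑ k, (ρ / M * Ystar k - Ω k - p k) = 0 := by
    simp_rw [hY, sub_sub, sum_sub_distrib, sum_const, card_univ, Fintype.card_fin, nsmul_eq_mul]
    field_simp
    ring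
  rw [Aggregation.objective_eq_cost ρ p y lam hfeas,
    Aggregation.objective_eq_cost ρ p y lam hfeas_star] at hobj
  have hybar_eq := Aggregation.eq_of_cost_le ρ p y lam hρ hgrad hc
    (fun k k' => by simp_rw [sum_sub_distrib, ← hfeas, ← hfeas_star, hconst k k', hY k, hY k'])
    hobj
  subst hybar_eq
  exact ⟨funext fun k => (hfeas k).trans (hfeas_star k).symm, fun _ => rfl⟩
end

section
/- (KKT verification, Appendix B.) Let N ≥ 1, M ≥ 1, ρ > 0, p ∈ ℝ^N, and y_b, λ_b ∈ ℝ^N for b = 1,…,M be given. Define the scalar Y*^k := (1/(ρN)) ( Σ_{b=1}^M Σ_{k=1}^N (ρ y_b^k − λ_b^k) + M Σ_{k=1}^N p^k ), the vector Y* := Y*^k · 1_{N×1} ∈ ℝ^N, the multiplier η* := (1/M) ( Σ_{b=1}^M (ρ y_b − λ_b) − ρ Y* ) ∈ ℝ^N, and ȳ*_b := y_b − (1/ρ)(λ_b + η*) ∈ ℝ^N for each b. Then the KKT conditions of the aggregation-step problem hold: (a) Σ_{k=1}^N (η*^k + p^k) = 0; (b) ȳ*_b = y_b − (1/ρ)(λ_b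 + η*) for each b (stationarity in ȳ_b); and (c) Y* = Σ_{b=1}^M ȳ*_b (primal feasibility). Moreover ȳ*_b agrees with the formula ȳ*_b = (1/ρ)(ρ y_b − λ_b − Ω) + (1/M) Y*, where Ω := (1/M) Σ_{b=1}^M (ρ y_b − λ_b). -/
/-!
Summing the stationarity conditions `ȳ_b = y_b − (λ_b + η)/ρ` over the buildings gives
`Σ_b ȳ_b = (Σ_b (ρ y_b − λ_b) − M η)/ρ`, and `η*` is precisely the multiplier that makes this
equal to `Y*`. Summing `η*` over the horizon, the defining formula of `Y*^k` makes
`ρ N Y*^k` cancel `Σ_k Σ_b (ρ y_b^k − λ_b^k)` and leaves `Σ_k η*^k = −Σ_k p^k`.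
-/

open Finset

lemma sum_stationary_eq_of_multiplier_eq {ι : Type*} [Fintype ι] [Nonempty ι]
    {ρ : ℝ} (hρ : ρ ≠ 0) (y lam : ι → ℝ) {Y η : ℝ}
    (hη : η = (1 / (Fintype.card ι : ℝ)) * ((∑ b, (ρ * y b - lam b)) - ρ * Y)) :
    ∑ b, (y b - (1 / ρ) * (lam b + η)) = Y := by
  have hcard : (Fintype.card ι : ℝ) ≠ 0 := by positivity
  have hsum : ∑ b, (y b - (1 / ρ) * (lam b + η))
      = (1 / ρ) * ((∑ b, (ρ * y b - lam b)) - Fintype.card ι * η) := by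
    simp only [sum_sub_distrib, sum_add_distrib, ← mul_sum, sum_const, card_univ,
      nsmul_eq_mul]
    field_simp
    ring
  rw [hsum, hη]
  field_simp
  ring

lemma sum_multiplier_add_price_eq_zero {κ : Type*} [Fintype κ] [Nonempty κ]
    {ρ m : ℝ} (hρ : ρ ≠ 0) (hm : m ≠ 0) (s p : κ → ℝ) {Y : ℝ}
    (hY : Y = (1 / (ρ * Fintype.card κ)) * ((∑ k, s k) + m * ∑ k, p k))
    {η : κ → ℝ} (hη : ∀ k, η k = (1 / m) * (s k - ρ * Y)) :
    ∑ k, (η k + p k) = 0 := by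
  have hcard : (Fintype.card κ : ℝ) ≠ 0 := by positivity
  simp only [sum_add_distrib, hη, ← mul_sum, sum_sub_distrib, sum_const, card_univ,
    nsmul_eq_mul, hY]
  field_simp
  ring

/-- **KKT verification, Appendix B.** The closed-form quantities
`Y*`, `η*`, `ȳ*_b` satisfy the KKT conditions of the aggregation-step problem:
(a) `Σ_k (η*^k + p^k) = 0`; (b) stationarity `ȳ*_b = y_b − (1/ρ)(λ_b + η*)`;
(c) primal feasibility `Y* = Σ_b ȳ*_b`; and moreover `ȳ*_b` agrees with the
formula `ȳ*_b = (1/ρ)(ρ y_b − λ_b − Ω) + (1/M) Y*`. -/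
theorem aggregation_step_kkt
    (N M : ℕ) (hN : 1 ≤ N) (hM : 1 ≤ M)
    (ρ : ℝ) (hρ : 0 < ρ) (p : Fin N → ℝ)
    (y lam : Fin M → Fin N → ℝ)
    (Yk : ℝ)
    (hYk : Yk = (1 / (ρ * (N : ℝ))) *
      ((∑ b, ∑ k, (ρ * y b k - lam b k)) + (M : ℝ) * ∑ k, p k))
    (Ystar : Fin N → ℝ) (hY : ∀ k, Ystar k = Yk)
    (etastar : Fin N → ℝ)
    (heta : ∀ k, etastar k =
      (1 / (M : ℝ)) * ((∑ b, (ρ * y b k - lam b k)) - ρ * Ystar k))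
    (ybarstar : Fin M → Fin N → ℝ)
    (hybar : ∀ b k, ybarstar b k = y b k - (1 / ρ) * (lam b k + etastar k))
    (Ω : Fin N → ℝ)
    (hΩ : ∀ k, Ω k = (1 / (M : ℝ)) * ∑ b, (ρ * y b k - lam b k)) :
    (∑ k, (etastar k + p k) = 0) ∧
    (∀ b k, ybarstar b k = y b k - (1 / ρ) * (lam b k + etastar k)) ∧
    (∀ k, Ystar k = ∑ b, ybarstar b k) ∧
    (∀ b k, ybarstar b k =
      (1 / ρ) * (ρ * y b k - lam b k - Ω k) + (1 / (M : ℝ)) * Ystar k) := by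
  have : NeZero N := ⟨by omega⟩
  have : NeZero M := ⟨by omega⟩
  have hMne : (M : ℝ) ≠ 0 := by positivity
  refine ⟨?_, hybar, fun k => ?_, fun b k => ?_⟩
  · rw [sum_comm] at hYk
    refine sum_multiplier_add_price_eq_zero hρ.ne' hMne (fun k => ∑ b, (ρ * y b k - lam b k)) p
      (by simpa using hYk) (fun k => ?_)
    rw [heta k, hY k]
  · simp only [hybar]
    exact (sum_stationary_eq_of_multiplier_eq hρ.ne' (y · k) (lam · k)
      (by simpa using heta k)).symm
  · rw [hybar, heta, hΩ]
    field_simp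
    ring
end

section
/- (Proposition 4(i)–(ii): building-invariant Lagrange multipliers.) Let N ≥ 1, M ≥ 1, ρ > 0, p ∈ ℝ^N, and y_b, λ_b ∈ ℝ^N for b = 1,…,M be given, and set Ω := (1/M) Σ_{b=1}^M (ρ y_b − λ_b), Y* := (M/(ρN)) 1_{N×N}(Ω + p), and ȳ*_b := (1/ρ)(ρ y_b − λ_b − Ω) + (1/M) Y*. Then for every b = 1,…,M, the updated multiplier λ_b + ρ(ȳ*_b − y_b) equals (ρ/M) Y* − Ω. In particular, after one iteration of the algorithm all buildings carry the same Lagrange multiplier Λ := (ρ/M) Y* − Ω, independent of b. -/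
theorem multiplier_update_eq {K : Type*} [Field K] {ρ : K} (hρ : ρ ≠ 0) (M y l Ω Y : K) :
    l + ρ * ((1 / ρ) * (ρ * y - l - Ω) + (1 / M) * Y - y) = ρ / M * Y - Ω := by
  field_simp
  ring

theorem building_invariant_multiplier_general
    (N M : ℕ)
    (ρ : ℝ) (hρ : 0 < ρ)
    (y lam : Fin M → Fin N → ℝ)
    (Ω : Fin N → ℝ)
    (Ystar : Fin N → ℝ)
    (ybarstar : Fin M → Fin N → ℝ)
    (hybar : ∀ b k, ybarstar b k =
      (1 / ρ) * (ρ * y b k - lam b k - Ω k) + (1 / (M : ℝ)) * Ystar k)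
    (Lambda : Fin N → ℝ)
    (hLambda : ∀ k, Lambda k = (ρ / (M : ℝ)) * Ystar k - Ω k) :
    ∀ b k, lam b k + ρ * (ybarstar b k - y b k) = Lambda k := by
  intro b k
  rw [hybar, hLambda]
  exact multiplier_update_eq hρ.ne' _ _ _ _ _

/-- **Proposition 4(i)–(ii).** After one ADMM iteration the
updated Lagrange multiplier `λ_b + ρ(ȳ*_b − y_b)` equals `(ρ/M) Y* − Ω` for
every building `b`; in particular it is the same for all buildings. -/
theorem building_invariant_multiplier
    (N M : ℕ) (hN : 1 ≤ N) (hM : 1 ≤ M)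
    (ρ : ℝ) (hρ : 0 < ρ) (p : Fin N → ℝ)
    (y lam : Fin M → Fin N → ℝ)
    (Ω : Fin N → ℝ)
    (hΩ : ∀ k, Ω k = (1 / (M : ℝ)) * ∑ b, (ρ * y b k - lam b k))
    (Ystar : Fin N → ℝ)
    (hY : ∀ k, Ystar k = ((M : ℝ) / (ρ * (N : ℝ))) * ∑ j, (Ω j + p j))
    (ybarstar : Fin M → Fin N → ℝ)
    (hybar : ∀ b k, ybarstar b k =
      (1 / ρ) * (ρ * y b k - lam b k - Ω k) + (1 / (M : ℝ)) * Ystar k)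
    (Lambda : Fin N → ℝ)
    (hLambda : ∀ k, Lambda k = (ρ / (M : ℝ)) * Ystar k - Ω k) :
    ∀ b k, lam b k + ρ * (ybarstar b k - y b k) = Lambda k :=
  building_invariant_multiplier_general N M ρ hρ y lam Ω Ystar ybarstar hybar Lambda hLambda
end

section
/- (Proposition 4(iii): total reward is preserved by Lagrangian-based allocation at convergence.) Let N ≥ 1, M ≥ 1, ρ > 0, p ∈ ℝ^N, and Ω ∈ ℝ^N. Define Y := (M/(ρN)) 1_{N×N}(Ω + p) and Λ := (ρ/M) Y − Ω. Suppose y_1,…,y_M ∈ ℝ^N satisfy Σ_{b=1}^M y_b = Y. Then the Lagrangian-based rewards r_b^Λ := Λ^⊤ y_b satisfy Σ_{b=1}^M r_b^Λ = p^⊤ Y, i.e., exactly the total reward R = p^⊤ Y is distributed. -/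
/-! At consensus the aggregate bid `Y` is the constant vector `κ S`, with `κ = M / (ρ N)` and
`S = ∑ (Ω + p)`, so every `Λ_k` equals `S / N - Ω_k`. Summing the rewards over buildings gives
`Λ ⬝ Y = κ S ∑ Λ`, and `∑ Λ = S - ∑ Ω = ∑ p`, which turns it into `κ S ∑ p = p ⬝ Y`. -/

open Matrix

theorem lagrangian_reward_total_general
    (N M : ℕ)
    (ρ : ℝ) (p Ω : Fin N → ℝ)
    (Y : Fin N → ℝ)
    (hY : ∀ k, Y k = ((M : ℝ) / (ρ * (N : ℝ))) * ∑ j, (Ω j + p j))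
    (Lambda : Fin N → ℝ)
    (hLambda : ∀ k, Lambda k = (ρ / (M : ℝ)) * Y k - Ω k)
    (y : Fin M → Fin N → ℝ)
    (hsum : ∀ k, ∑ b, y b k = Y k) :
    ∑ b, (∑ k, Lambda k * y b k) = ∑ k, p k * Y k := by
  set S := ∑ j, (Ω j + p j)
  set κ : ℝ := M / (ρ * N)
  have hS : S = ∑ k, Ω k + ∑ k, p k := Finset.sum_add_distrib
  have hY_sum : Y = ∑ b, y b := funext fun k => by rw [Finset.sum_apply, hsum]
  have hΛ_sum : ∑ k, Lambda k = κ⁻¹ * (κ * S) - ∑ k, Ω k := by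
    have hκ_inv : ρ / M * N = κ⁻¹ := by rw [inv_div]; ring
    simp only [hLambda, hY, Finset.sum_sub_distrib, Finset.sum_const, Finset.card_univ,
      Fintype.card_fin, nsmul_eq_mul]
    rw [← hκ_inv]
    ring
  calc ∑ b, ∑ k, Lambda k * y b k = Lambda ⬝ᵥ Y := by rw [hY_sum, dotProduct_sum]; rfl
    _ = κ * S * ∑ k, Lambda k := by simp only [dotProduct, hY, ← Finset.sum_mul]; ring
    -- `κ * κ⁻¹ * κ = κ` holds also when `κ = 0`, i.e. in the degenerate cases `ρ N M = 0`.
    _ = κ * κ⁻¹ * κ * S * S - κ * S * ∑ k, Ω k := by rw [hΛ_sum]; ring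
    _ = κ * S * ∑ k, p k := by rw [mul_inv_mul_cancel, hS]; ring
    _ = ∑ k, p k * Y k := by simp only [hY, ← Finset.sum_mul]; ring

/-- **Proposition 4(iii).** At a converged ADMM solution the
Lagrangian-based rewards `r_b^Λ = Λ⊤ y_b` distribute exactly the total reward:
`Σ_b r_b^Λ = p⊤ Y`. -/
theorem lagrangian_reward_total
    (N M : ℕ) (hN : 1 ≤ N) (hM : 1 ≤ M)
    (ρ : ℝ) (hρ : 0 < ρ) (p Ω : Fin N → ℝ)
    (Y : Fin N → ℝ)
    (hY : ∀ k, Y k = ((M : ℝ) / (ρ * (N : ℝ))) * ∑ j, (Ω j + p j))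
    (Lambda : Fin N → ℝ)
    (hLambda : ∀ k, Lambda k = (ρ / (M : ℝ)) * Y k - Ω k)
    (y : Fin M → Fin N → ℝ)
    (hsum : ∀ k, ∑ b, y b k = Y k) :
    ∑ b, (∑ k, Lambda k * y b k) = ∑ k, p k * Y k :=
  lagrangian_reward_total_general N M ρ p Ω Y hY Lambda hLambda y hsum
end

section
/- (Proposition 4(iv): total reward is preserved by Lagrangian-based allocation after feasible extraction.) Let N ≥ 1, M ≥ 1, ρ > 0, p ∈ ℝ^N, and Λ ∈ ℝ^N. Let Y^F ∈ ℝ^N be any constant vector (Y^F = c · 1_{N×1} for some c ∈ ℝ), define Ω^F := (ρ/M) Y^F − Λ and Λ^F := (1/N) 1_{N×N}(Ω^F + p) − Ω^F. Then for any y_1^F,…,y_M^F ∈ ℝ^N with Σ_{b=1}^M y_b^F = Y^F, the rewards r_b^Λ := (Λ^F)^⊤ y_b^F satisfy Σ_{b=1}^M r_b^Λ = p^⊤ Y^F. -/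
/-! Since `Y^F` is constant, `Σ_b (Λ^F)ᵀ y_b^F` collapses to `(Σ_k Λ^F_k) · c`, and the
mean-correction in `Λ^F` makes `Σ_k Λ^F_k = Σ_k p_k`. -/

open Finset

theorem sum_sum_mul_of_sum_eq_const {ι β R : Type*} [Fintype ι] [Fintype β] [CommSemiring R]
    (a : ι → R) (y : β → ι → R) (c : R) (hy : ∀ k, ∑ b, y b k = c) :
    ∑ b, ∑ k, a k * y b k = (∑ k, a k) * c := by
  rw [sum_comm, sum_mul]
  exact sum_congr rfl fun k _ => by rw [← mul_sum, hy]

theorem sum_inv_card_mul_sum_add_sub_eq_sum {ι K : Type*} [Fintype ι] [Field K] [CharZero K]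
    (ω p : ι → K) :
    ∑ i, (1 / (Fintype.card ι : K) * ∑ j, (ω j + p j) - ω i) = ∑ i, p i := by
  cases isEmpty_or_nonempty ι
  · simp
  have hcard : (Fintype.card ι : K) ≠ 0 := by simp
  rw [sum_sub_distrib, sum_const, card_univ, nsmul_eq_mul, ← mul_assoc, mul_one_div_cancel hcard,
    one_mul, sum_add_distrib, add_sub_cancel_left]

theorem lagrangian_reward_total_feasible_extraction_general
    (N M : ℕ)
    (p : Fin N → ℝ)
    (YF : Fin N → ℝ) (c : ℝ) (hYF : ∀ k, YF k = c)
    (ΩF : Fin N → ℝ)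
    (LambdaF : Fin N → ℝ)
    (hLF : ∀ k, LambdaF k = (1 / (N : ℝ)) * (∑ j, (ΩF j + p j)) - ΩF k)
    (yF : Fin M → Fin N → ℝ)
    (hsum : ∀ k, ∑ b, yF b k = YF k) :
    ∑ b, (∑ k, LambdaF k * yF b k) = ∑ k, p k * YF k := by
  have hLF_sum : ∑ k, LambdaF k = ∑ k, p k := by
    simpa only [← hLF, Fintype.card_fin] using sum_inv_card_mul_sum_add_sub_eq_sum ΩF p
  calc ∑ b, ∑ k, LambdaF k * yF b k = (∑ k, LambdaF k) * c :=
        sum_sum_mul_of_sum_eq_const LambdaF yF c fun k => (hsum k).trans (hYF k)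
    _ = ∑ k, p k * YF k := by simp only [hLF_sum, sum_mul, hYF]

/-- **Proposition 4(iv).** After feasible extraction, the
Lagrangian-based rewards with the modified price vector `Λ^F` distribute
exactly the total reward: `Σ_b (Λ^F)⊤ y_b^F = p⊤ Y^F`. -/
theorem lagrangian_reward_total_feasible_extraction
    (N M : ℕ) (hN : 1 ≤ N) (hM : 1 ≤ M)
    (ρ : ℝ) (hρ : 0 < ρ) (p Lambda : Fin N → ℝ)
    (YF : Fin N → ℝ) (c : ℝ) (hYF : ∀ k, YF k = c)
    (ΩF : Fin N → ℝ)
    (hΩF : ∀ k, ΩF k = (ρ / (M : ℝ)) * YF k - Lambda k)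
    (LambdaF : Fin N → ℝ)
    (hLF : ∀ k, LambdaF k = (1 / (N : ℝ)) * (∑ j, (ΩF j + p j)) - ΩF k)
    (yF : Fin M → Fin N → ℝ)
    (hsum : ∀ k, ∑ b, yF b k = YF k) :
    ∑ b, (∑ k, LambdaF k * yF b k) = ∑ k, p k * YF k :=
  lagrangian_reward_total_feasible_extraction_general N M p YF c hYF ΩF LambdaF hLF yF hsum
end

section
/- (Proposition 3: feasible extraction yields a feasible point of the aggregated bidding problem.) For each building b = 1,…,M, let 𝒞_b be a constraint set determined by data (𝐀_b, 𝐁_b, 𝐄_b, x¹_b, v_b, η_b, 𝒳_b, 𝒰_b), and suppose (u_b(·), y_b) ∈ 𝒞_b with y_b ≥ 0 componentwise and Σ_{b=1}^M y_b^k > 0 for every k = 1,…,N. Define c := min_k Σ_{b=1}^M y_b^k, Y^F := c · 1_{N×1}, and (y_b^k)^F := (c / Σ_{j=1}^M y_j^k) · y_b^k. Then there exist policies u_b^F(·) (for instance u_b^F = u_b) such that (u_b^F(·), y_b^F) ∈ 𝒞_b for every b, Σ_{b=1}^M y_b^F = Y^F, and Y^F has all entries equal; hence (Y^F, {u_b^F(·),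 y_b^F}_b) satisfies all constraints of the aggregated bidding problem. -/
/-- Membership in the building constraint set `𝒞` determined by the data
`(𝐀, 𝐁, 𝐄, x¹, v, η, 𝒳, 𝒰)`. -/
def MemBuildingC {n m q N : ℕ}
    (A : Matrix (Fin N × Fin n) (Fin n) ℝ)
    (B : Matrix (Fin N × Fin n) (Fin N × Fin m) ℝ)
    (E : Matrix (Fin N × Fin n) (Fin N × Fin q) ℝ)
    (x1 : Fin n → ℝ) (v : Fin N × Fin q → ℝ) (η : Fin m → ℝ)
    (X : Set ((Fin N × Fin n) → ℝ)) (U : Set ((Fin N × Fin m) → ℝ))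
    (u : (Fin N → ℝ) → ((Fin N × Fin m) → ℝ)) (y : Fin N → ℝ) : Prop :=
  ∃ (Δu : (Fin N → ℝ) → ((Fin N × Fin m) → ℝ))
    (x : (Fin N → ℝ) → ((Fin N × Fin n) → ℝ)),
    ∀ s : Fin N → ℝ, (∀ k, -(y k) ≤ s k ∧ s k ≤ y k) →
      x s = A.mulVec x1 + B.mulVec (u s + Δu s) + E.mulVec v ∧
      x s ∈ X ∧ (u s + Δu s) ∈ U ∧
      ∀ k, s k = ∑ j, η j * Δu s (k, j)

/-!
The minimal aggregate bid `c` is at most every `∑ b, y b k`, so each rescaling factor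
`c / ∑ b, y b k` lies in `[0, 1]` and `y_b^F ≤ y_b`. Shrinking the bid only shrinks the box of
activation signals `s` the policy must serve, so the original policies stay feasible; and the
rescaled bids add up to `c` in every period by construction.
-/

theorem MemBuildingC.mono {n m q N : ℕ}
    {A : Matrix (Fin N × Fin n) (Fin n) ℝ}
    {B : Matrix (Fin N × Fin n) (Fin N × Fin m) ℝ}
    {E : Matrix (Fin N × Fin n) (Fin N × Fin q) ℝ}
    {x1 : Fin n → ℝ} {v : Fin N × Fin q → ℝ} {η : Fin m → ℝ}
    {X : Set ((Fin N × Fin n) → ℝ)} {U : Set ((Fin N × Fin m) → ℝ)}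
    {u : (Fin N → ℝ) → ((Fin N × Fin m) → ℝ)} {y y' : Fin N → ℝ}
    (h : MemBuildingC A B E x1 v η X U u y) (hy : y' ≤ y) :
    MemBuildingC A B E x1 v η X U u y' := by
  obtain ⟨Δu, x, hx⟩ := h
  refine ⟨Δu, x, fun s hs => hx s fun k => ?_⟩
  obtain ⟨hlo, hhi⟩ := hs k
  exact ⟨(neg_le_neg (hy k)).trans hlo, hhi.trans (hy k)⟩

theorem div_mul_le_self_of_le {K : Type*} [Semifield K] [LinearOrder K] [IsStrictOrderedRing K]
    {c s a : K} (hcs : c ≤ s) (hs : 0 ≤ s) (ha : 0 ≤ a) :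
    c / s * a ≤ a :=
  mul_le_of_le_one_left ha (div_le_one_of_le₀ hcs hs)

theorem Finset.sum_div_sum_mul {ι K : Type*} [Semifield K] (t : Finset ι) (w : ι → K) (c : K)
    (hw : ∑ j ∈ t, w j ≠ 0) :
    ∑ i ∈ t, c / (∑ j ∈ t, w j) * w i = c := by
  rw [← Finset.mul_sum, div_mul_cancel₀ c hw]

theorem feasible_extraction_feasible_general
    (N M : ℕ) (hN : 1 ≤ N)
    (n m q : Fin M → ℕ)
    (A : ∀ b, Matrix (Fin N × Fin (n b)) (Fin (n b)) ℝ)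
    (B : ∀ b, Matrix (Fin N × Fin (n b)) (Fin N × Fin (m b)) ℝ)
    (E : ∀ b, Matrix (Fin N × Fin (n b)) (Fin N × Fin (q b)) ℝ)
    (x1 : ∀ b, Fin (n b) → ℝ) (v : ∀ b, Fin N × Fin (q b) → ℝ)
    (η : ∀ b, Fin (m b) → ℝ)
    (X : ∀ b, Set ((Fin N × Fin (n b)) → ℝ))
    (U : ∀ b, Set ((Fin N × Fin (m b)) → ℝ))
    (u : ∀ b, (Fin N → ℝ) → ((Fin N × Fin (m b)) → ℝ))
    (y : Fin M → Fin N → ℝ)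
    (hmem : ∀ b, MemBuildingC (A b) (B b) (E b) (x1 b) (v b) (η b)
      (X b) (U b) (u b) (y b))
    (hy : ∀ b k, 0 ≤ y b k)
    (hpos : ∀ k, 0 < ∑ b, y b k)
    (c : ℝ)
    (hc : c = Finset.univ.inf' ⟨⟨0, hN⟩, Finset.mem_univ _⟩
      (fun k : Fin N => ∑ b, y b k))
    (YF : Fin N → ℝ) (hYF : ∀ k, YF k = c)
    (yF : Fin M → Fin N → ℝ)
    (hyF : ∀ b k, yF b k = (c / ∑ j, y j k) * y b k) :
    ∃ uF : ∀ b, (Fin N → ℝ) → ((Fin N × Fin (m b)) → ℝ),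
      (∀ b, MemBuildingC (A b) (B b) (E b) (x1 b) (v b) (η b)
        (X b) (U b) (uF b) (yF b)) ∧
      (∀ k, ∑ b, yF b k = YF k) ∧
      (∀ k k', YF k = YF k') := by
  have hc_le : ∀ k, c ≤ ∑ b, y b k := fun k => hc ▸ Finset.inf'_le _ (Finset.mem_univ k)
  refine ⟨u, fun b => (hmem b).mono fun k => ?_, fun k => ?_, fun k k' => by rw [hYF, hYF]⟩
  · rw [hyF]
    exact div_mul_le_self_of_le (hc_le k) (hpos k).le (hy b k)
  · simp only [hyF, hYF]
    exact Finset.univ.sum_div_sum_mul (fun j => y j k) c (hpos k).ne'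

/-- **Proposition 3.** Feasible extraction yields a feasible
point of the aggregated bidding problem: given `(u_b(·), y_b) ∈ 𝒞_b` with
`y_b ≥ 0` and `Σ_b y_b^k > 0` for all `k`, the clipped constant bid `Y^F` and
the rescaled bids `y_b^F` admit policies `u_b^F(·)` with `(u_b^F(·), y_b^F) ∈ 𝒞_b`
for all `b`, `Σ_b y_b^F = Y^F`, and `Y^F` constant over time. -/
theorem feasible_extraction_feasible
    (N M : ℕ) (hN : 1 ≤ N) (hM : 1 ≤ M)
    (n m q : Fin M → ℕ)
    (A : ∀ b, Matrix (Fin N × Fin (n b)) (Fin (n b)) ℝ)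
    (B : ∀ b, Matrix (Fin N × Fin (n b)) (Fin N × Fin (m b)) ℝ)
    (E : ∀ b, Matrix (Fin N × Fin (n b)) (Fin N × Fin (q b)) ℝ)
    (x1 : ∀ b, Fin (n b) → ℝ) (v : ∀ b, Fin N × Fin (q b) → ℝ)
    (η : ∀ b, Fin (m b) → ℝ)
    (X : ∀ b, Set ((Fin N × Fin (n b)) → ℝ))
    (U : ∀ b, Set ((Fin N × Fin (m b)) → ℝ))
    (u : ∀ b, (Fin N → ℝ) → ((Fin N × Fin (m b)) → ℝ))
    (y : Fin M → Fin N → ℝ)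
    (hmem : ∀ b, MemBuildingC (A b) (B b) (E b) (x1 b) (v b) (η b)
      (X b) (U b) (u b) (y b))
    (hy : ∀ b k, 0 ≤ y b k)
    (hpos : ∀ k, 0 < ∑ b, y b k)
    (c : ℝ)
    (hc : c = Finset.univ.inf' ⟨⟨0, hN⟩, Finset.mem_univ _⟩
      (fun k : Fin N => ∑ b, y b k))
    (YF : Fin N → ℝ) (hYF : ∀ k, YF k = c)
    (yF : Fin M → Fin N → ℝ)
    (hyF : ∀ b k, yF b k = (c / ∑ j, y j k) * y b k) :
    ∃ uF : ∀ b, (Fin N → ℝ) → ((Fin N × Fin (m b)) → ℝ),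
      (∀ b, MemBuildingC (A b) (B b) (E b) (x1 b) (v b) (η b)
        (X b) (U b) (uF b) (yF b)) ∧
      (∀ k, ∑ b, yF b k = YF k) ∧
      (∀ k k', YF k = YF k') :=
  feasible_extraction_feasible_general N M hN n m q A B E x1 v η X U u y hmem hy hpos c hc YF hYF yF
    hyF
end
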